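/- arXiv:1202.2111 — 3 statements merged into one kernel-verified Lean document; each statement's English description precedes it below -/
import Mathlib

section
/- (Upper bound of Proposition 1.) Let c = (c₁,…,c_N) ∈ ℝ^N with cᵢ > 0 and ‖c‖ = 1, and let u, v ∈ ℝ^N. Set Δ = ‖u − v‖ and δ = ‖Φ_c(u) − Φ_c(v)‖. If 0 < Δ ≤ π, then δ ≤ (sin(Δ/2)/(Δ/2))·Δ = 2 sin(Δ/2) ≤ Δ. -/
open Real
open scoped RealInnerProductSpace

/-- The map `Φ_c : ℝ^N → ℝ^{2N}`,
`Φ_c(u) = (c₁cos(u₁/c₁), c₁sin(u₁/c₁), …, c_N cos(u_N/c_N), c_N sin(u_N/c_N))`,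
where `ℝ^{2N}` is modeled as `EuclideanSpace ℝ (Fin N × Fin 2)`. -/
noncomputable def PhiTorus {N : ℕ} (c u : EuclideanSpace ℝ (Fin N)) :
    EuclideanSpace ℝ (Fin N × Fin 2) :=
  (WithLp.equiv 2 _).symm fun p =>
    if p.2 = 0 then c p.1 * Real.cos (u p.1 / c p.1)
    else c p.1 * Real.sin (u p.1 / c p.1)

/-!
Coordinatewise, `Φ_c` wraps the `i`-th axis onto a circle of radius `cᵢ`, and the chord spanning an
arc of length `wᵢ = uᵢ - vᵢ` is `2 cᵢ |sin (wᵢ / (2 cᵢ))|`. With `xᵢ = wᵢ / (2 cᵢ)` this gives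
`δ² = 4 ∑ cᵢ² sin² xᵢ` and `∑ cᵢ² xᵢ² = (Δ/2)²`. Since `∑ cᵢ² = 1` these are weighted means, and
`s ↦ sin² √s` is concave on `[0, (π/2)²]` (its derivative `sin (2√s) / (2√s)` decreases), so Jensen's
inequality bounds `∑ cᵢ² sin² xᵢ` by `sin² (Δ/2)`.
-/

open Set

-- `sin t / t` is the slope of the concave function `sin` from `0`.
lemma Real.antitoneOn_sin_div_self : AntitoneOn (fun t => sin t / t) (Ioc 0 π) := by
  have h := strictConcaveOn_sin_Icc.concaveOn.slope_anti (x := 0) ⟨le_rfl, pi_pos.le⟩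
  refine (h.mono fun t ht => ⟨Ioc_subset_Icc_self ht, ht.1.ne'⟩).congr fun t _ => ?_
  simp [slope_def_field]

lemma Real.hasDerivAt_sin_sqrt_sq {s : ℝ} (hs : 0 < s) :
    HasDerivAt (fun s => sin (√s) ^ 2) (sin (2 * √s) / (2 * √s)) s := by
  have h := (((hasDerivAt_sin √s).comp s (hasDerivAt_sqrt hs.ne')).pow 2)
  refine h.congr_deriv ?_
  have : √s ≠ 0 := (sqrt_pos.2 hs).ne'
  rw [sin_two_mul]
  field_simp
  simp only [Function.comp_apply, Nat.cast_ofNat]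
  ring

lemma Real.concaveOn_sin_sqrt_sq :
    ConcaveOn ℝ (Icc 0 ((π / 2) ^ 2)) (fun s => sin (√s) ^ 2) := by
  refine AntitoneOn.concaveOn_of_deriv (convex_Icc _ _)
    ((continuous_sin.comp continuous_sqrt).pow 2).continuousOn
    (fun s hs => ?_) (fun s hs t ht hst => ?_)
  · rw [interior_Icc] at hs
    exact (hasDerivAt_sin_sqrt_sq hs.1).differentiableAt.differentiableWithinAt
  rw [interior_Icc] at hs ht
  have two_sqrt_mem {r : ℝ} (hr : r ∈ Ioo 0 ((π / 2) ^ 2)) : 2 * √r ∈ Ioc 0 π := by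
    have : √r < π / 2 := (sqrt_lt' (by positivity)).2 hr.2
    exact ⟨by positivity [hr.1], by linarith⟩
  rw [(hasDerivAt_sin_sqrt_sq hs.1).deriv, (hasDerivAt_sin_sqrt_sq ht.1).deriv]
  exact antitoneOn_sin_div_self (two_sqrt_mem hs) (two_sqrt_mem ht) (by gcongr)

lemma Real.sin_sq_le_sin_sqrt_min_sq (x : ℝ) :
    sin x ^ 2 ≤ sin √(min (x ^ 2) ((π / 2) ^ 2)) ^ 2 := by
  rcases le_total (x ^ 2) ((π / 2) ^ 2) with h | h
  · rw [min_eq_left h, sqrt_sq_eq_abs]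
    rcases abs_choice x with hx | hx <;> simp [hx]
  · rw [min_eq_right h, sqrt_sq (by positivity), sin_pi_div_two, one_pow]
    exact sin_sq_le_one x

lemma Real.sum_mul_sin_sq_le_sin_sq {ι : Type*} (s : Finset ι) {a x : ι → ℝ} {r : ℝ}
    (ha : ∀ i ∈ s, 0 ≤ a i) (ha₁ : ∑ i ∈ s, a i = 1) (hr₀ : 0 ≤ r) (hr : r ≤ π / 2)
    (hx : ∑ i ∈ s, a i * x i ^ 2 ≤ r ^ 2) :
    ∑ i ∈ s, a i * sin (x i) ^ 2 ≤ sin r ^ 2 := by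
  -- Clamping `x i ^ 2` at `(π / 2) ^ 2` only raises `sin (√·) ^ 2` and lands in its interval
  -- of concavity.
  set y : ι → ℝ := fun i => min (x i ^ 2) ((π / 2) ^ 2)
  have hy : ∀ i, y i ∈ Icc 0 ((π / 2) ^ 2) := fun i =>
    ⟨le_min (sq_nonneg _) (sq_nonneg _), min_le_right _ _⟩
  have hS : ∑ i ∈ s, a i * y i ≤ r ^ 2 :=
    (Finset.sum_le_sum fun i hi => mul_le_mul_of_nonneg_left (min_le_left _ _) (ha i hi)).trans hx
  have hsqrtS : √(∑ i ∈ s, a i * y i) ≤ r := (sqrt_le_left hr₀).2 hS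
  calc ∑ i ∈ s, a i * sin (x i) ^ 2
      ≤ ∑ i ∈ s, a i * sin √(y i) ^ 2 :=
        Finset.sum_le_sum fun i hi =>
          mul_le_mul_of_nonneg_left (sin_sq_le_sin_sqrt_min_sq _) (ha i hi)
    _ ≤ sin √(∑ i ∈ s, a i * y i) ^ 2 :=
        concaveOn_sin_sqrt_sq.le_map_sum ha ha₁ fun i _ => hy i
    _ ≤ sin r ^ 2 := by
        have := sqrt_nonneg (∑ i ∈ s, a i * y i)
        gcongr
        · exact sin_nonneg_of_nonneg_of_le_pi this (by linarith [pi_pos])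
        · exact sin_le_sin_of_le_of_le_pi_div_two (by linarith [pi_pos]) hr hsqrtS

lemma Real.sq_sub_cos_add_sq_sub_sin (a b : ℝ) :
    (cos a - cos b) ^ 2 + (sin a - sin b) ^ 2 = (2 * sin ((a - b) / 2)) ^ 2 := by
  rw [cos_sub_cos, sin_sub_sin]
  linear_combination (4 * sin ((a - b) / 2) ^ 2) * sin_sq_add_cos_sq ((a + b) / 2)

lemma norm_PhiTorus_sub_sq {N : ℕ} (c u v : EuclideanSpace ℝ (Fin N)) :
    ‖PhiTorus c u - PhiTorus c v‖ ^ 2 =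
      ∑ i, (2 * c i * sin ((u i - v i) / (2 * c i))) ^ 2 := by
  rw [EuclideanSpace.real_norm_sq_eq, Fintype.sum_prod_type]
  refine Finset.sum_congr rfl fun i _ => ?_
  have : (u i / c i - v i / c i) / 2 = (u i - v i) / (2 * c i) := by
    rw [div_sub_div_same, div_div, mul_comm]
  simp only [PhiTorus, Fin.isValue, WithLp.equiv_symm_apply, PiLp.sub_apply, Fin.sum_univ_two,
    ↓reduceIte, one_ne_zero]
  rw [← mul_sub, ← mul_sub, mul_pow, mul_pow, ← mul_add, sq_sub_cos_add_sq_sub_sin, this]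
  ring

/-- Upper bound of Proposition 1. -/
theorem stmt_3 (N : ℕ) (c : EuclideanSpace ℝ (Fin N)) (hc : ∀ i, 0 < c i)
    (hnorm : ‖c‖ = 1) (u v : EuclideanSpace ℝ (Fin N)) (Δ δ : ℝ)
    (hΔ : Δ = ‖u - v‖) (hδ : δ = ‖PhiTorus c u - PhiTorus c v‖)
    (h0 : 0 < Δ) (hπ : Δ ≤ π) :
    δ ≤ 2 * Real.sin (Δ / 2) ∧
      Real.sin (Δ / 2) / (Δ / 2) * Δ = 2 * Real.sin (Δ / 2) ∧
      2 * Real.sin (Δ / 2) ≤ Δ := by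
  refine ⟨?_, by field_simp, by linarith [sin_le (half_pos h0).le]⟩
  set x : Fin N → ℝ := fun i => (u i - v i) / (2 * c i)
  have hc₁ : ∑ i, c i ^ 2 = 1 := by rw [← EuclideanSpace.real_norm_sq_eq, hnorm, one_pow]
  have hx : ∑ i, c i ^ 2 * x i ^ 2 = (Δ / 2) ^ 2 := by
    rw [hΔ, div_pow, EuclideanSpace.real_norm_sq_eq, Finset.sum_div]
    refine Finset.sum_congr rfl fun i _ => ?_
    simp only [x, PiLp.sub_apply]
    field_simp [(hc i).ne']
  have hδ₂ : δ ^ 2 = 4 * ∑ i, c i ^ 2 * sin (x i) ^ 2 := by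
    rw [hδ, norm_PhiTorus_sub_sq, Finset.mul_sum]
    exact Finset.sum_congr rfl fun i _ => by ring
  have hsum := sum_mul_sin_sq_le_sin_sq Finset.univ (fun i _ => sq_nonneg (c i)) hc₁
    (half_pos h0).le (by linarith) hx.le
  have hsin : 0 ≤ sin (Δ / 2) := sin_nonneg_of_nonneg_of_le_pi (by linarith) (by linarith [pi_pos])
  refine (pow_le_pow_iff_left₀ (hδ ▸ norm_nonneg _) (by positivity) two_ne_zero).1 ?_
  rw [hδ₂, mul_pow]
  linarith
end

section
/- (Theorem 1, part (i): the lifted matrix generates a projection dual.) Let n = N − 1 ≥ 1, let c₂,…,c_N be positive reals (set c₁ = 1), let L* be an n×n real lower triangular matrix, and for w ∈ ℕ let L*_w be the n×N matrix with rows (⌊w l*_{i1}⌋, ⌊w l*_{i2} c₂⌋/c₂, …, ⌊w l*_{ii} c_i⌋/c_i, 1/c_{i+1}, 0, …, 0). Then there exist integers u₂,…,u_N (depending on w) such that the ℤ-span of the rows of L*_w equals the ℤ-span of the rows of the n×N matrix M whose i-th row is (−u_{i+1}, 0, …, 0, 1/c_{i+1}, 0, …, 0), where the entry 1/c_{i+1}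 is in column i+1. -/
/-!
Every entry of `L*_w` in column `j` is an integer divided by `c_j`, and the integers in columns
`2, …, N` form a lower unitriangular matrix `A`. Since `c₁ = 1`, the rows of `L*_w` are the
rows of `M` combined with the coefficients of `A` as soon as `-A u` is the first column of
`L*_w`, which forces `u = -A⁻¹ (⌊w l*_{i1}⌋)ᵢ`; as `det A = 1`, the two families span the same
subgroup.
-/

open Submodule Set
open scoped Matrix

section SpanOfMatrixCombination

variable {R V ι : Type*} [CommRing R] [AddCommGroup V] [Module R V] [Fintype ι]

theorem sum_smul_sum_smul_eq_mul (A B : Matrix ι ι R) (v : ι → V) (i : ι) :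
    ∑ k, B i k • ∑ l, A k l • v l = ∑ l, (B * A) i l • v l := by
  simp only [Finset.smul_sum, smul_smul, Matrix.mul_apply, Finset.sum_smul]
  exact Finset.sum_comm

theorem span_range_sum_smul_le (A : Matrix ι ι R) (v : ι → V) :
    span R (range fun i => ∑ k, A i k • v k) ≤ span R (range v) :=
  span_le.mpr <| range_subset_iff.mpr fun _ =>
    sum_mem fun k _ => smul_mem _ _ (subset_span (mem_range_self k))

theorem span_range_sum_smul_eq [DecidableEq ι] (A : Matrix ι ι R) (hA : IsUnit A.det)
    (v : ι → V) : span R (range fun i => ∑ k, A i k • v k) = span R (range v) := by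
  refine le_antisymm (span_range_sum_smul_le A v) ?_
  convert span_range_sum_smul_le A⁻¹ (fun i => ∑ k, A i k • v k) using 3
  funext i
  simp [sum_smul_sum_smul_eq_mul, Matrix.nonsing_inv_mul A hA, Matrix.one_apply, ite_smul]

end SpanOfMatrixCombination

section ProjectionDual

variable {n : ℕ}

noncomputable def projectionDual (c : Fin (n + 1) → ℝ) (u : Fin n → ℤ) :
    Fin n → Fin (n + 1) → ℝ :=
  fun i j => if j = 0 then -(u i : ℝ) else if (j : ℕ) = (i : ℕ) + 1 then 1 / c j else 0

theorem sum_zsmul_projectionDual (c : Fin (n + 1) → ℝ) (hc0 : c 0 = 1)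
    (A : Matrix (Fin n) (Fin n) ℤ) (u : Fin n → ℤ) (i : Fin n) :
    ∑ m, A i m • projectionDual c u m =
      fun j => ((Fin.cons (-(A *ᵥ u) i) (A i) : Fin (n + 1) → ℤ) j : ℝ) / c j := by
  funext j
  refine Fin.cases ?_ (fun j => ?_) j
  · simp [projectionDual, hc0, Matrix.mulVec, dotProduct]
  · simp [projectionDual, Fin.succ_ne_zero, Fin.val_eq_val, div_eq_mul_inv]

theorem exists_span_range_eq_span_projectionDual (c : Fin (n + 1) → ℝ) (hc0 : c 0 = 1)
    (Z : Matrix (Fin n) (Fin (n + 1)) ℤ) (hZ : IsUnit (Z.submatrix id Fin.succ).det) :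
    ∃ u, span ℤ (range fun i j => (Z i j : ℝ) / c j) = span ℤ (range (projectionDual c u)) := by
  set A := Z.submatrix id Fin.succ
  refine ⟨-(A⁻¹ *ᵥ fun i => Z i 0), ?_⟩
  have hu : -(A *ᵥ -(A⁻¹ *ᵥ fun i => Z i 0)) = fun i => Z i 0 := by
    rw [Matrix.mulVec_neg, neg_neg, Matrix.mulVec_mulVec, Matrix.mul_nonsing_inv A hZ,
      Matrix.one_mulVec]
  rw [← span_range_sum_smul_eq A hZ (projectionDual c _)]
  congr 2
  funext i
  rw [sum_zsmul_projectionDual c hc0, ← Pi.neg_apply, hu]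
  exact funext fun j => by rw [← Fin.cons_self_tail (Z i)]; rfl

end ProjectionDual

section LiftedMatrix

variable {n : ℕ}

noncomputable def liftNumerators (c : Fin (n + 1) → ℝ) (L : Matrix (Fin n) (Fin n) ℝ) (w : ℕ) :
    Matrix (Fin n) (Fin (n + 1)) ℤ :=
  fun i j => if h : (j : ℕ) ≤ (i : ℕ) then ⌊(w : ℝ) * L i ⟨j, lt_of_le_of_lt h i.isLt⟩ * c j⌋
    else if (j : ℕ) = (i : ℕ) + 1 then 1 else 0

theorem liftNumerators_div (c : Fin (n + 1) → ℝ) (L : Matrix (Fin n) (Fin n) ℝ) (w : ℕ)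
    (i : Fin n) (j : Fin (n + 1)) :
    (liftNumerators c L w i j : ℝ) / c j =
      if h : (j : ℕ) ≤ (i : ℕ) then
        (⌊(w : ℝ) * L i ⟨(j : ℕ), lt_of_le_of_lt h i.isLt⟩ * c j⌋ : ℝ) / c j
      else if (j : ℕ) = (i : ℕ) + 1 then 1 / c j else 0 := by
  unfold liftNumerators
  split_ifs <;> simp

theorem det_liftNumerators_submatrix_succ (c : Fin (n + 1) → ℝ) (L : Matrix (Fin n) (Fin n) ℝ)
    (w : ℕ) : ((liftNumerators c L w).submatrix id Fin.succ).det = 1 := by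
  rw [Matrix.det_of_isLowerTriangular]
  · refine Finset.prod_eq_one fun i _ => ?_
    simp [liftNumerators]
  · intro i m him
    have him : (i : ℕ) < m := him
    simp only [Matrix.submatrix_apply, id, liftNumerators, Fin.val_succ]
    rw [dif_neg (by omega), if_neg (by omega)]

end LiftedMatrix

theorem stmt_16_general (n : ℕ) (c : Fin (n + 1) → ℝ) (hc0 : c 0 = 1)
    (L : Matrix (Fin n) (Fin n) ℝ)
    (Lw : ℕ → Matrix (Fin n) (Fin (n + 1)) ℝ)
    (hLw : ∀ (w : ℕ) (i : Fin n) (j : Fin (n + 1)),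
      Lw w i j =
        if h : (j : ℕ) ≤ (i : ℕ) then
          (⌊(w : ℝ) * L i ⟨(j : ℕ), lt_of_le_of_lt h i.isLt⟩ * c j⌋ : ℝ) / c j
        else if (j : ℕ) = (i : ℕ) + 1 then 1 / c j else 0) :
    ∀ w : ℕ, ∃ u : Fin n → ℤ,
      Submodule.span ℤ (Set.range (Lw w)) =
        Submodule.span ℤ (Set.range fun i : Fin n => (fun j : Fin (n + 1) =>
          if j = 0 then -(u i : ℝ)
          else if (j : ℕ) = (i : ℕ) + 1 then 1 / c j else 0)) := by
  intro w
  have hLw_eq : Lw w = fun i j => (liftNumerators c L w i j : ℝ) / c j :=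
    funext fun i => funext fun j => by rw [hLw, liftNumerators_div]
  rw [hLw_eq]
  exact exists_span_range_eq_span_projectionDual c hc0 _
    (by rw [det_liftNumerators_submatrix_succ]; exact isUnit_one)

/-- Theorem 1(i): for every w, the rows of the lifted matrix L*_w span (over ℤ) the same
additive subgroup of ℝ^N as the rows of a matrix M whose i-th row is
(−u_{i+1}, 0, …, 0, 1/c_{i+1}, 0, …, 0) with 1/c_{i+1} in column i+1, for some
integers u₂,…,u_N depending on w. Here c₁ = 1, c₂,…,c_N > 0, N = n+1, and L*_w has
rows (⌊w l*_{i1}⌋, ⌊w l*_{i2} c₂⌋/c₂, …, ⌊w l*_{ii} c_i⌋/c_i, 1/c_{i+1}, 0, …, 0). -/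
theorem stmt_16 (n : ℕ) (hn : 1 ≤ n) (c : Fin (n + 1) → ℝ)
    (hc : ∀ i, 0 < c i) (hc0 : c 0 = 1)
    (L : Matrix (Fin n) (Fin n) ℝ) (hL : ∀ i j : Fin n, i < j → L i j = 0)
    (Lw : ℕ → Matrix (Fin n) (Fin (n + 1)) ℝ)
    (hLw : ∀ (w : ℕ) (i : Fin n) (j : Fin (n + 1)),
      Lw w i j =
        if h : (j : ℕ) ≤ (i : ℕ) then
          (⌊(w : ℝ) * L i ⟨(j : ℕ), lt_of_le_of_lt h i.isLt⟩ * c j⌋ : ℝ) / c j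
        else if (j : ℕ) = (i : ℕ) + 1 then 1 / c j else 0) :
    ∀ w : ℕ, ∃ u : Fin n → ℤ,
      Submodule.span ℤ (Set.range (Lw w)) =
        Submodule.span ℤ (Set.range fun i : Fin n => (fun j : Fin (n + 1) =>
          if j = 0 then -(u i : ℝ)
          else if (j : ℕ) = (i : ℕ) + 1 then 1 / c j else 0)) :=
  stmt_16_general n c hc0 L Lw hLw
end

section
/- (Equation (11): explicit generator of the dual of a projected rectangular lattice.) Let c = (1, c₂, …, c_N) with cᵢ > 0, let u₂,…,u_N ∈ ℤ, and set û = (1, u₂c₂, …, u_N c_N) ∈ ℝ^N. Let M be the (N−1)×N matrix whose i-th row is m_i = (−u_{i+1}, 0, …, 0, 1/c_{i+1}, 0, …, 0) with the entry 1/c_{i+1} in column i+1. Then the ℤ-span of the rows of M equals { x ∈ ℝ^N : ⟨x, û⟩ = 0 and ⟨x, (k₁, k₂c₂, …, k_N c_N)⟩ ∈ ℤ for every (k₁,…,k_N) ∈ ℤ^N }, i.e., M generates the dual lattice of the orthogonal projection of the rectangular lattice Λ_c = ℤ ⊕ c₂ℤ ⊕ … ⊕ c_Nℤ onto the hyperplane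 û^⊥. -/
/-- Equation (11): the matrix M with rows m_i = (−u_{i+1}, 0, …, 0, 1/c_{i+1}, 0, …, 0)
(entry 1/c_{i+1} in column i+1) generates, over ℤ, exactly the dual lattice of the
orthogonal projection of the rectangular lattice Λ_c = ℤ ⊕ c₂ℤ ⊕ … ⊕ c_Nℤ onto the
hyperplane û^⊥, for û = (1, u₂c₂, …, u_Nc_N): that is, the set of x ∈ ℝ^N with
⟨x, û⟩ = 0 and ⟨x, λ⟩ ∈ ℤ for every λ ∈ Λ_c. -/
theorem stmt_17 (n : ℕ) (hn : 1 ≤ n) (c : Fin (n + 1) → ℝ)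
    (hc : ∀ i, 0 < c i) (hc0 : c 0 = 1) (u : Fin n → ℤ)
    (uhat : Fin (n + 1) → ℝ)
    (huhat : uhat = Fin.cons 1 (fun i : Fin n => (u i : ℝ) * c i.succ))
    (M : Fin n → Fin (n + 1) → ℝ)
    (hM : ∀ i : Fin n,
      M i = Fin.cons (-(u i : ℝ)) (fun j : Fin n => if j = i then 1 / c i.succ else 0)) :
    (Submodule.span ℤ (Set.range M) : Set (Fin (n + 1) → ℝ)) =
      {x : Fin (n + 1) → ℝ |
        (∑ j, x j * uhat j) = 0 ∧
        ∀ k : Fin (n + 1) → ℤ, ∃ m : ℤ, (∑ j, x j * ((k j : ℝ) * c j)) = (m : ℝ)} := by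
  have hcne : ∀ i : Fin (n + 1), c i ≠ 0 := fun i => (hc i).ne'
  -- package the RHS as a ℤ-submodule
  let S : Submodule ℤ (Fin (n + 1) → ℝ) :=
    { carrier := {x : Fin (n + 1) → ℝ |
        (∑ j, x j * uhat j) = 0 ∧
        ∀ k : Fin (n + 1) → ℤ, ∃ m : ℤ, (∑ j, x j * ((k j : ℝ) * c j)) = (m : ℝ)}
      zero_mem' := by
        constructor
        · simp
        · intro k; exact ⟨0, by simp⟩
      add_mem' := by
        rintro x y ⟨hx1, hx2⟩ ⟨hy1, hy2⟩
        constructor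
        · simp only [Pi.add_apply, add_mul, Finset.sum_add_distrib, hx1, hy1, add_zero]
        · intro k
          obtain ⟨m1, hm1⟩ := hx2 k
          obtain ⟨m2, hm2⟩ := hy2 k
          exact ⟨m1 + m2, by
            simp only [Pi.add_apply, add_mul, Finset.sum_add_distrib, hm1, hm2]; push_cast; ring⟩
      smul_mem' := by
        rintro z x ⟨hx1, hx2⟩
        constructor
        · simp only [Pi.smul_apply, zsmul_eq_mul, mul_assoc, ← Finset.mul_sum, hx1, mul_zero]
        · intro k
          obtain ⟨m, hm⟩ := hx2 k
          exact ⟨z * m, by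
            simp only [Pi.smul_apply, zsmul_eq_mul, mul_assoc, ← Finset.mul_sum, hm]
            push_cast; ring⟩ }
  have hsub : Submodule.span ℤ (Set.range M) ≤ S := by
    rw [Submodule.span_le]
    rintro _ ⟨i, rfl⟩
    constructor
    · rw [hM i, huhat, Fin.sum_univ_succ]
      simp only [Fin.cons_zero, Fin.cons_succ, ite_mul, zero_mul]
      rw [Finset.sum_ite_eq' Finset.univ i, if_pos (Finset.mem_univ i),
        show (1:ℝ)/c i.succ * ((u i:ℝ) * c i.succ)
          = (u i:ℝ) * (c i.succ / c i.succ) by ring, div_self (hcne i.succ)]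
      ring
    · intro k
      refine ⟨-(u i) * k 0 + k i.succ, ?_⟩
      rw [hM i, Fin.sum_univ_succ]
      simp only [Fin.cons_zero, Fin.cons_succ, ite_mul, zero_mul]
      rw [Finset.sum_ite_eq' Finset.univ i, if_pos (Finset.mem_univ i), hc0,
        show (1:ℝ)/c i.succ * ((k i.succ:ℝ) * c i.succ)
          = (k i.succ:ℝ) * (c i.succ / c i.succ) by ring, div_self (hcne i.succ)]
      push_cast
      ring
  apply Set.Subset.antisymm hsub
  -- reverse inclusion
  rintro x ⟨hx1, hx2⟩
  -- integer coefficients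
  have key : ∀ i : Fin n, ∃ m : ℤ, (m : ℝ) = x i.succ * c i.succ := by
    intro i
    obtain ⟨m, hm⟩ := hx2 (fun j => if j = i.succ then 1 else 0)
    refine ⟨m, ?_⟩
    rw [← hm]
    rw [Finset.sum_eq_single i.succ]
    · simp
    · intro b _ hb; simp [hb]
    · simp
  choose m hm using key
  have hx0 : x 0 = ∑ i : Fin n, (-(u i) * m i : ℤ) := by
    rw [huhat, Fin.sum_univ_succ] at hx1
    simp only [Fin.cons_zero, Fin.cons_succ, mul_one] at hx1
    push_cast
    have : ∀ i : Fin n, x i.succ * ((u i : ℝ) * c i.succ) = (u i : ℝ) * (m i : ℝ) := by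
      intro i; rw [hm i]; ring
    rw [Finset.sum_congr rfl (fun i _ => this i)] at hx1
    have hs : (∑ i : Fin n, -(u i : ℝ) * (m i : ℝ)) = -∑ i : Fin n, (u i : ℝ) * (m i : ℝ) := by
      rw [← Finset.sum_neg_distrib]
      exact Finset.sum_congr rfl fun i _ => neg_mul _ _
    rw [hs]
    linarith
  have hxeq : x = ∑ i : Fin n, m i • M i := by
    funext j
    rw [Finset.sum_apply]
    refine Fin.cases ?_ ?_ j
    · rw [hx0]
      push_cast
      apply Finset.sum_congr rfl
      intro i _
      rw [hM i]
      simp [zsmul_eq_mul]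
      ring
    · intro p
      have : ∀ i : Fin n, (m i • M i) p.succ = if p = i then (m i : ℝ) / c i.succ else 0 := by
        intro i
        rw [hM i]
        simp only [Pi.smul_apply, Fin.cons_succ, zsmul_eq_mul]
        rw [mul_ite, mul_zero, mul_one_div]
      rw [Finset.sum_congr rfl (fun i _ => this i), Finset.sum_ite_eq Finset.univ p,
        if_pos (Finset.mem_univ p), hm p, mul_div_assoc, div_self (hcne p.succ), mul_one]
  rw [hxeq]
  exact Submodule.sum_mem _ fun i _ =>
    Submodule.smul_mem _ (m i) (Submodule.subset_span ⟨i, rfl⟩)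
end
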